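/- arXiv:2010.12846 — 3 statements merged into one kernel-verified Lean document; each statement's English description precedes it below -/
import Mathlib

section
/- Let n ≥ 1, p ∈ [1,∞), and let ζ : ℝ → (0,∞) be continuous and strictly decreasing such that ∫₀^∞ ζ(t)^p t^(n−1) dt < ∞. If u_k, u ∈ Conv_c^{(n)}(ℝⁿ) are such that ∫_{ℝⁿ} |ζ(u_k(x)) − ζ(u(x))|^p dx → 0, then u_k(x₀) → u(x₀) as k → ∞ for every point x₀ in the interior of the domain {u < +∞} of u. -/
open MeasureTheory Filter Topology Set
open scoped Classical ENNReal

noncomputable section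

abbrev En (n : ℕ) := EuclideanSpace ℝ (Fin n)

/-- `ζ` applied to an extended real value, with the convention `ζ (+∞) = 0`. -/
def zeval (ζ : ℝ → ℝ) (t : EReal) : ℝ := if t = ⊤ then 0 else ζ t.toReal

/-- The epigraph of an extended-real-valued function. -/
def epiSet {n : ℕ} (u : En n → EReal) : Set (En n × ℝ) := {p | u p.1 ≤ (p.2 : EReal)}

/-- `Conv_c(ℝⁿ)`: proper, lower semicontinuous, convex, coercive functions with
values in `ℝ ∪ {+∞}`. -/
def ConvC (n : ℕ) (u : En n → EReal) : Prop :=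
  (∀ x, u x ≠ ⊥) ∧ (∃ x, u x ≠ ⊤) ∧ LowerSemicontinuous u ∧
    Convex ℝ (epiSet u) ∧ Tendsto u (cocompact (En n)) (𝓝 ⊤)

/-- `Conv_c^{(n)}(ℝⁿ)`: members of `Conv_c(ℝⁿ)` with full-dimensional domain. -/
def ConvCd (n : ℕ) (u : En n → EReal) : Prop :=
  ConvC n u ∧ (interior {x | u x ≠ ⊤}).Nonempty

/-- Epi-convergence of a sequence of extended-real-valued functions. -/
def EpiTendsto {n : ℕ} (u : ℕ → En n → EReal) (v : En n → EReal) : Prop :=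
  ∀ x : En n,
    (∀ y : ℕ → En n, Tendsto y atTop (𝓝 x) →
      v x ≤ Filter.liminf (fun k => u k (y k)) atTop) ∧
    (∃ y : ℕ → En n, Tendsto y atTop (𝓝 x) ∧
      Filter.limsup (fun k => u k (y k)) atTop ≤ v x)

/-- Super-coercivity: `u x / ‖x‖ → +∞` as `‖x‖ → ∞`. -/
def SuperCoercive {n : ℕ} (u : En n → EReal) : Prop :=
  ∀ M : ℝ, ∀ᶠ x in cocompact (En n), ((M * ‖x‖ : ℝ) : EReal) ≤ u x

/-- The functional `δ_{ζ,p}`. -/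
def deltaZP {n : ℕ} (ζ : ℝ → ℝ) (p : ℝ) (u v : En n → EReal) : ℝ :=
  (∫ x : En n, |zeval ζ (u x) - zeval ζ (v x)| ^ p) ^ (1 / p)

/-- The functional `δ_{ζ,1} = δ_ζ`. -/
def delta1 {n : ℕ} (ζ : ℝ → ℝ) (u v : En n → EReal) : ℝ :=
  ∫ x : En n, |zeval ζ (u x) - zeval ζ (v x)|

/-- `f` applied to an extended real value with the convention `f (+∞) = +∞`. -/
def emap (f : ℝ → ℝ) (t : EReal) : EReal := if t = ⊤ then ⊤ else ((f t.toReal : ℝ) : EReal)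

/-- The (convex) indicator function `I^∞_K + t`. -/
def indE {n : ℕ} (K : Set (En n)) (t : ℝ) : En n → EReal :=
  fun x => if x ∈ K then (t : EReal) else ⊤

/-- Nondegenerate parallelotope: Minkowski sum of `n` linearly independent segments. -/
def IsParallelotope {n : ℕ} (P : Set (En n)) : Prop :=
  ∃ (z : En n) (b : Fin n → En n), LinearIndependent ℝ b ∧
    P = (fun c : Fin n → ℝ => z + ∑ i, c i • b i) '' (Set.univ.pi fun _ => Set.Icc (0:ℝ) 1)

/-- Convex body with nonempty interior. -/
def IsConvexBodyI {n : ℕ} (K : Set (En n)) : Prop :=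
  IsCompact K ∧ Convex ℝ K ∧ (interior K).Nonempty

/-- Convex body: nonempty compact convex set. -/
def IsCB {n : ℕ} (K : Set (En n)) : Prop := K.Nonempty ∧ IsCompact K ∧ Convex ℝ K

/-- The extension `d̂_H` of the Hausdorff metric to `K(ℝⁿ) ∪ {∅}`. -/
def dhatH {n : ℕ} (K L : Set (En n)) : ℝ :=
  if K = ∅ then (if L = ∅ then 0 else max 1 (Metric.hausdorffDist L {0}))
  else if L = ∅ then max 1 (Metric.hausdorffDist K {0})
  else Metric.hausdorffDist K L

/-- The functional `δ_ζ^H`. -/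
def deltaH {n : ℕ} (ζ : ℝ → ℝ) (u v : En n → EReal) : ℝ :=
  ∫ s in Set.Ioi (0:ℝ), dhatH {x | s ≤ zeval ζ (u x)} {x | s ≤ zeval ζ (v x)}

/-- The Legendre–Fenchel conjugate. -/
def conjF {n : ℕ} (u : En n → EReal) : En n → EReal :=
  fun y => ⨆ x : En n, (((inner ℝ x y : ℝ) : EReal) - u x)

/-- The admissible set in the definition of the Hausdorff-type metric `δ` of Section 5.2:
`λ > 0` such that `‖u^* - v^*‖_{∞, (1/λ)Bⁿ} ≤ λ`. -/
def DSet {n : ℕ} (u v : En n → EReal) : Set ℝ :=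
  {l : ℝ | 0 < l ∧ ∀ x : En n, ‖x‖ ≤ 1 / l →
    conjF u x ≤ conjF v x + (l : EReal) ∧ conjF v x ≤ conjF u x + (l : EReal)}

/-- The Hausdorff-type metric `δ` of Section 5.2. -/
def deltaStar {n : ℕ} (u v : En n → EReal) : ℝ := sInf (DSet u v)

/-!
Convex coercive functions grow at least linearly, so the moment condition on `ζ` makes the
integrand integrable (otherwise the Bochner integral in the hypothesis would be a junk `0`), and
Markov's inequality turns the hypothesis into convergence in measure: for every `c > 0` the set
where `|ζ(u_k) - ζ(v)| ≥ c` has vanishing volume. Being convex, `v` is continuous at `x₀`, so it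
stays close to `v x₀` on a small ball `B`; off the bad set, `u_k ≤ v x₀ + ε / 2` on `B`.
Once the bad set covers less than half of `B`, some `z` and its mirror image `2 x₀ - z` are both
good, and convexity bounds `u_k x₀` from above. If `u_k x₀ ≤ v x₀ - ε`, convexity on the segments
from `x₀` pushes `u_k` below `v - ε / 8` on the image of the good part of `B` under the homothety
of ratio `1/2` about `x₀`, a set of volume at least `2⁻ⁿ |B| / 2`: a contradiction.
-/

open Metric

lemma EReal.tendsto_coe_of_forall_eventually {α : Type*} {l : Filter α} {f : α → EReal} {A : ℝ}
    (h : ∀ ε > 0, ∀ᶠ k in l, ((A - ε : ℝ) : EReal) < f k ∧ f k < ((A + ε : ℝ) : EReal)) :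
    Tendsto f l (𝓝 (A : EReal)) := by
  refine tendsto_order.2 ⟨fun a ha => ?_, fun a ha => ?_⟩
  · obtain ⟨c, hac, hcA⟩ := EReal.lt_iff_exists_real_btwn.1 ha
    have hε : 0 < A - c := by
      linarith [EReal.coe_lt_coe_iff.1 hcA]
    filter_upwards [h _ hε] with k hk
    exact hac.trans (by simpa using hk.1)
  · obtain ⟨c, hAc, hca⟩ := EReal.lt_iff_exists_real_btwn.1 ha
    have hε : 0 < c - A := by
      linarith [EReal.coe_lt_coe_iff.1 hAc]
    filter_upwards [h _ hε] with k hk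
    exact (by simpa using hk.2 : f k < c).trans hca

section Zeval

variable {ζ : ℝ → ℝ}

@[simp]
lemma zeval_coe (ζ : ℝ → ℝ) (r : ℝ) : zeval ζ r = ζ r := by
  simp [zeval]

lemma zeval_nonneg (hζ0 : ∀ t, 0 ≤ ζ t) (t : EReal) : 0 ≤ zeval ζ t := by
  unfold zeval
  split_ifs
  exacts [le_rfl, hζ0 _]

lemma zeval_le_zeval (hζ : Antitone ζ) (hζ0 : ∀ t, 0 ≤ ζ t) {s t : EReal} (hs : s ≠ ⊥)
    (hst : s ≤ t) : zeval ζ t ≤ zeval ζ s := by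
  rcases eq_or_ne t ⊤ with rfl | ht
  · simpa [zeval] using zeval_nonneg hζ0 s
  · have hs' : s ≠ ⊤ := ne_top_of_le_ne_top ht hst
    simpa [zeval, ht, hs'] using hζ (EReal.toReal_le_toReal hst hs ht)

lemma le_of_abs_zeval_sub_lt (hζ : Antitone ζ) (hζ0 : ∀ t, 0 ≤ ζ t) {s t : EReal} {a M : ℝ}
    (hs : s ≠ ⊥) (hsa : s ≤ a) (h : |zeval ζ t - zeval ζ s| < ζ a - ζ M) : t ≤ M := by
  by_contra! hMt
  have ht : zeval ζ t ≤ ζ M := by simpa using zeval_le_zeval hζ hζ0 (by simp) hMt.le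
  have hs : ζ a ≤ zeval ζ s := by simpa using zeval_le_zeval hζ hζ0 hs hsa
  linarith [neg_abs_le (zeval ζ t - zeval ζ s)]

lemma sub_le_abs_zeval_sub (hζ : Antitone ζ) (hζ0 : ∀ t, 0 ≤ ζ t) {s t : EReal} {a m : ℝ}
    (ht : t ≠ ⊥) (htm : t ≤ m) (has : (a : EReal) ≤ s) : ζ m - ζ a ≤ |zeval ζ t - zeval ζ s| := by
  have ht : ζ m ≤ zeval ζ t := by simpa using zeval_le_zeval hζ hζ0 ht htm
  have hs : zeval ζ s ≤ ζ a := by simpa using zeval_le_zeval hζ hζ0 (by simp) has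
  linarith [le_abs_self (zeval ζ t - zeval ζ s)]

lemma measurable_zeval (hζ : Measurable ζ) : Measurable (zeval ζ) :=
  Measurable.ite (measurableSet_singleton ⊤) measurable_const (hζ.comp measurable_ereal_toReal)

end Zeval

section Convexity

variable {n : ℕ} {w : En n → EReal}

lemma le_of_convex_epiSet (hw : Convex ℝ (epiSet w)) {x y : En n} {s r : ℝ}
    (hx : w x ≤ s) (hy : w y ≤ r) {t₁ t₂ : ℝ} (h₁ : 0 ≤ t₁) (h₂ : 0 ≤ t₂) (h₁₂ : t₁ + t₂ = 1) :
    w (t₁ • x + t₂ • y) ≤ ((t₁ * s + t₂ * r : ℝ) : EReal) := by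
  simpa [epiSet] using hw (show (x, s) ∈ epiSet w from hx) (show (y, r) ∈ epiSet w from hy)
    h₁ h₂ h₁₂

lemma convexOn_toReal_of_convex_epiSet (hbot : ∀ x, w x ≠ ⊥) (hw : Convex ℝ (epiSet w)) :
    ConvexOn ℝ {x | w x ≠ ⊤} fun x => (w x).toReal := by
  have key : ∀ x ∈ {x | w x ≠ ⊤}, ∀ y ∈ {x | w x ≠ ⊤}, ∀ ⦃t₁ t₂ : ℝ⦄, 0 ≤ t₁ → 0 ≤ t₂ →
      t₁ + t₂ = 1 → w (t₁ • x + t₂ • y) ≤ ((t₁ * (w x).toReal + t₂ * (w y).toReal : ℝ) : EReal) :=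
    fun x hx y hy _ _ h₁ h₂ h₁₂ => le_of_convex_epiSet hw (EReal.le_coe_toReal hx)
      (EReal.le_coe_toReal hy) h₁ h₂ h₁₂
  refine ⟨fun x hx y hy t₁ t₂ h₁ h₂ h₁₂ => ?_, fun x hx y hy t₁ t₂ h₁ h₂ h₁₂ => ?_⟩
  · exact ne_top_of_le_ne_top (EReal.coe_ne_top _) (key x hx y hy h₁ h₂ h₁₂)
  · simpa only [EReal.toReal_coe, smul_eq_mul] using
      EReal.toReal_le_toReal (key x hx y hy h₁ h₂ h₁₂) (hbot _) (EReal.coe_ne_top _)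

lemma continuousAt_of_convex_epiSet (hbot : ∀ x, w x ≠ ⊥) (hw : Convex ℝ (epiSet w))
    {x₀ : En n} (hx₀ : x₀ ∈ interior {x | w x ≠ ⊤}) : ContinuousAt w x₀ := by
  have hreal : ContinuousAt (fun x => (w x).toReal) x₀ :=
    (convexOn_toReal_of_convex_epiSet hbot hw).continuousOn_interior.continuousAt
      (isOpen_interior.mem_nhds hx₀)
  have heq : (fun x => ((w x).toReal : EReal)) =ᶠ[𝓝 x₀] w := by
    filter_upwards [mem_interior_iff_mem_nhds.1 hx₀] with x hx
    exact EReal.coe_toReal hx (hbot x)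
  exact (continuous_coe_real_ereal.continuousAt.comp hreal).congr heq

end Convexity

section Growth

variable {n : ℕ} {w : En n → EReal}

lemma le_of_convex_epiSet_of_far (hw : Convex ℝ (epiSet w)) {x₁ x : En n} {m R : ℝ}
    (hR : 0 < R) (hx₁ : w x₁ ≤ m) (hfar : ∀ y, dist y x₁ = R → ((m + 1 : ℝ) : EReal) < w y)
    (hx : R ≤ dist x x₁) : ((m + dist x x₁ / R : ℝ) : EReal) ≤ w x := by
  by_contra! hlt
  set d := dist x x₁
  have hd : 0 < d := hR.trans_le hx
  have hy := le_of_convex_epiSet hw hx₁ hlt.le (t₁ := 1 - R / d) (t₂ := R / d)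
    (sub_nonneg.2 ((div_le_one hd).2 hx)) (by positivity) (by ring)
  have hdist : dist ((1 - R / d) • x₁ + (R / d) • x) x₁ = R := by
    rw [dist_eq_norm, show (1 - R / d) • x₁ + (R / d) • x - x₁ = (R / d) • (x - x₁) by module,
      norm_smul, ← dist_eq_norm, Real.norm_of_nonneg (by positivity)]
    field_simp
    rfl
  have := EReal.coe_lt_coe_iff.1 ((hfar _ hdist).trans_le hy)
  field_simp at this
  linarith

lemma ConvC.exists_linear_lower_bound (hw : ConvC n w) :
    ∃ a b : ℝ, 0 < a ∧ ∀ x, ((a * ‖x‖ - b : ℝ) : EReal) ≤ w x := by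
  obtain ⟨hbot, ⟨x₁, hx₁⟩, hlsc, hconv, hcoer⟩ := hw
  set m := (w x₁).toReal
  obtain ⟨R, hR, hfar⟩ : ∃ R > 0, ∀ y, R ≤ dist y x₁ → ((m + 1 : ℝ) : EReal) < w y := by
    obtain ⟨K, hK, hKc⟩ := mem_cocompact.1 (hcoer (Ioi_mem_nhds (EReal.coe_lt_top (m + 1))))
    obtain ⟨r₁, hKr⟩ := hK.isBounded.subset_closedBall x₁
    refine ⟨max r₁ 0 + 1, by positivity, fun y hy => hKc fun hyK => ?_⟩
    have := mem_closedBall.1 (hKr hyK)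
    linarith [le_max_left r₁ 0]
  obtain ⟨x₂, -, hx₂⟩ := (hlsc.lowerSemicontinuousOn (closedBall x₁ R)).exists_isMinOn
    (nonempty_closedBall.2 hR.le) (isCompact_closedBall x₁ R)
  set r₀ := (w x₂).toReal
  have key : ∀ x, ((dist x x₁ / R - max (1 - r₀) (-m) : ℝ) : EReal) ≤ w x := by
    intro x
    rcases le_or_gt R (dist x x₁) with hx | hx
    · refine le_trans ?_ (le_of_convex_epiSet_of_far hconv hR (EReal.le_coe_toReal hx₁)
        (fun y hy => hfar y hy.ge) hx)
      exact EReal.coe_le_coe_iff.2 (by linarith [le_max_right (1 - r₀) (-m)])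
    · refine le_trans ?_ ((EReal.coe_toReal_le (hbot x₂)).trans (hx₂ (mem_closedBall.2 hx.le)))
      have : dist x x₁ / R ≤ 1 := (div_le_one hR).2 hx.le
      exact EReal.coe_le_coe_iff.2 (by linarith [le_max_left (1 - r₀) (-m)])
  refine ⟨R⁻¹, ‖x₁‖ / R + max (1 - r₀) (-m), inv_pos.2 hR, fun x => le_trans ?_ (key x)⟩
  have : ‖x‖ - ‖x₁‖ ≤ dist x x₁ := by rw [dist_eq_norm]; exact norm_sub_norm_le x x₁
  refine EReal.coe_le_coe_iff.2 ?_
  rw [← div_eq_inv_mul]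
  have := div_le_div_of_nonneg_right this hR.le
  rw [sub_div] at this
  linarith

end Growth

section Integrability

lemma integrableOn_pow_mul_comp_mul_sub {g : ℝ → ℝ} (hg : Continuous g) (hanti : Antitone g)
    (hg0 : ∀ t, 0 ≤ g t) {k : ℕ} (hint : IntegrableOn (fun t => g t * t ^ k) (Ioi 0))
    {a : ℝ} (ha : 0 < a) (b : ℝ) : IntegrableOn (fun t => t ^ k * g (a * t - b)) (Ioi 0) := by
  have hcont : Continuous fun t : ℝ => t ^ k * g (a * t - b) := by fun_prop
  set T := max 0 (2 * b / a)
  rw [← Ioc_union_Ioi_eq_Ioi (le_max_left 0 (2 * b / a))]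
  refine hcont.integrableOn_Ioc.union ?_
  have hhalf : IntegrableOn (fun t => g (a / 2 * t) * (a / 2 * t) ^ k) (Ioi T) := by
    have := (integrableOn_Ioi_comp_mul_left_iff (fun t => g t * t ^ k) 0
      (half_pos ha)).2 (by simpa using hint)
    exact this.mono_set (Ioi_subset_Ioi (le_max_left _ _))
  refine (hhalf.const_mul ((2 / a) ^ k)).mono' hcont.aestronglyMeasurable.restrict ?_
  refine (ae_restrict_iff' measurableSet_Ioi).2 (Eventually.of_forall fun t (ht : T < t) => ?_)
  have ht0 : 0 < t := (le_max_left _ _).trans_lt ht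
  have hle : a / 2 * t ≤ a * t - b := by
    have := (le_max_right 0 (2 * b / a)).trans_lt ht
    rw [div_lt_iff₀ ha] at this
    linarith
  have hpow : (2 / a) ^ k * (a / 2 * t) ^ k = t ^ k := by
    rw [← mul_pow]
    congr 1
    field_simp
  rw [Real.norm_of_nonneg (mul_nonneg (pow_nonneg ht0.le k) (hg0 _))]
  calc t ^ k * g (a * t - b) ≤ t ^ k * g (a / 2 * t) :=
        mul_le_mul_of_nonneg_left (hanti hle) (pow_nonneg ht0.le k)
    _ = (2 / a) ^ k * (g (a / 2 * t) * (a / 2 * t) ^ k) := by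
        rw [← hpow]; ring

variable {n : ℕ} {p : ℝ} {ζ : ℝ → ℝ}

lemma integrable_abs_zeval_sub_rpow (hn : 1 ≤ n) (hp : 0 ≤ p) (hζcont : Continuous ζ)
    (hζanti : Antitone ζ) (hζ0 : ∀ t, 0 ≤ ζ t)
    (hmom : IntegrableOn (fun t => ζ t ^ p * t ^ (n - 1)) (Ioi 0))
    {w w' : En n → EReal} (hw : ConvC n w) (hw' : ConvC n w') :
    Integrable fun x => |zeval ζ (w x) - zeval ζ (w' x)| ^ p := by
  have : Nonempty (Fin n) := ⟨⟨0, hn⟩⟩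
  obtain ⟨a, b, ha, hab⟩ := hw.exists_linear_lower_bound
  obtain ⟨a', b', ha', hab'⟩ := hw'.exists_linear_lower_bound
  have hlow : ∀ x, ((min a a' * ‖x‖ - max b b' : ℝ) : EReal) ≤ w x ∧
      ((min a a' * ‖x‖ - max b b' : ℝ) : EReal) ≤ w' x := fun x =>
    ⟨(EReal.coe_le_coe_iff.2 <| by
        nlinarith [norm_nonneg x, min_le_left a a', le_max_left b b']).trans (hab x),
      (EReal.coe_le_coe_iff.2 <| by
        nlinarith [norm_nonneg x, min_le_right a a', le_max_right b b']).trans (hab' x)⟩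
  have hdom : Integrable fun x : En n => ζ (min a a' * ‖x‖ - max b b') ^ p := by
    refine (integrable_fun_norm_addHaar volume
      (f := fun t => ζ (min a a' * t - max b b') ^ p)).2 ?_
    simpa [finrank_euclideanSpace_fin] using integrableOn_pow_mul_comp_mul_sub
      (hζcont.rpow_const fun _ => Or.inr hp)
      (fun s t hst => Real.rpow_le_rpow (hζ0 t) (hζanti hst) hp)
      (fun t => Real.rpow_nonneg (hζ0 t) p) hmom (lt_min ha ha') (max b b')
  have hmeas : Measurable fun x => |zeval ζ (w x) - zeval ζ (w' x)| ^ p := by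
    have := measurable_zeval hζcont.measurable
    have := hw.2.2.1.measurable
    have := hw'.2.2.1.measurable
    fun_prop
  refine hdom.mono' hmeas.aestronglyMeasurable (Eventually.of_forall fun x => ?_)
  rw [Real.norm_of_nonneg (by positivity)]
  refine Real.rpow_le_rpow (abs_nonneg _) ?_ hp
  rw [← zeval_coe ζ]
  exact abs_sub_le_of_nonneg_of_le (zeval_nonneg hζ0 _)
    (zeval_le_zeval hζanti hζ0 (EReal.coe_ne_bot _) (hlow x).1) (zeval_nonneg hζ0 _)
    (zeval_le_zeval hζanti hζ0 (EReal.coe_ne_bot _) (hlow x).2)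

end Integrability

lemma tendsto_measure_le_abs_of_tendsto_integral_rpow {α : Type*} [MeasurableSpace α]
    {μ : Measure α} {p : ℝ} (hp : 0 < p) {g : ℕ → α → ℝ}
    (hint : ∀ k, Integrable (fun x => |g k x| ^ p) μ)
    (hlim : Tendsto (fun k => ∫ x, |g k x| ^ p ∂μ) atTop (𝓝 0)) {c : ℝ} (hc : 0 < c) :
    Tendsto (fun k => μ {x | c ≤ |g k x|}) atTop (𝓝 0) := by
  have hcp : ENNReal.ofReal (c ^ p) ≠ 0 := (ENNReal.ofReal_pos.2 (Real.rpow_pos_of_pos hc p)).ne'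
  have hmarkov : ∀ k, μ {x | c ≤ |g k x|} ≤
      ENNReal.ofReal (∫ x, |g k x| ^ p ∂μ) / ENNReal.ofReal (c ^ p) := by
    intro k
    rw [ofReal_integral_eq_lintegral_ofReal (hint k) (Eventually.of_forall fun x => by positivity)]
    refine le_trans (measure_mono fun x (hx : c ≤ |g k x|) => ?_)
      (meas_ge_le_lintegral_div (hint k).aemeasurable.ennreal_ofReal hcp ENNReal.ofReal_ne_top)
    exact ENNReal.ofReal_le_ofReal (Real.rpow_le_rpow hc.le hx hp.le)
  have hbound : Tendsto (fun k => ENNReal.ofReal (∫ x, |g k x| ^ p ∂μ) / ENNReal.ofReal (c ^ p))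
      atTop (𝓝 0) := by
    simpa using ENNReal.Tendsto.div_const (ENNReal.tendsto_ofReal hlim) (Or.inr hcp)
  exact tendsto_of_tendsto_of_tendsto_of_le_of_le tendsto_const_nhds hbound (fun _ => bot_le)
    hmarkov

section Geometry

variable {n : ℕ} {w : En n → EReal} {x₀ : En n} {r : ℝ} {S : Set (En n)}

lemma le_of_le_on_closedBall_diff (hw : Convex ℝ (epiSet w))
    (hS : 2 * volume S < volume (closedBall x₀ r)) {M : ℝ}
    (hM : ∀ x ∈ closedBall x₀ r \ S, w x ≤ M) : w x₀ ≤ M := by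
  set σ := AffineMap.homothety x₀ (-1 : ℝ)
  have hσσ : ∀ z, σ (σ z) = z := fun z => by simp [σ, AffineMap.homothety_apply]
  have hσB : ∀ z ∈ closedBall x₀ r, σ z ∈ closedBall x₀ r := fun z hz => by
    simpa [σ, mem_closedBall, dist_comm] using hz
  obtain ⟨z, hzB, hzS, hσzS⟩ : ∃ z ∈ closedBall x₀ r, z ∉ S ∧ σ z ∉ S := by
    by_contra! hcover
    have hsub : closedBall x₀ r ⊆ S ∪ σ '' S := fun z hz => by
      by_cases hzS : z ∈ S
      · exact Or.inl hzS
      · exact Or.inr ⟨σ z, hcover z hz hzS, hσσ z⟩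
    have hσS : volume (σ '' S) = volume S := by
      simp [σ, Measure.addHaar_image_homothety]
    have := (measure_mono hsub).trans (measure_union_le (μ := volume) S (σ '' S))
    rw [hσS, ← two_mul] at this
    exact this.not_gt hS
  have hmid : (2⁻¹ : ℝ) • z + (2⁻¹ : ℝ) • σ z = x₀ := by
    simp only [σ, AffineMap.homothety_apply, vsub_eq_sub, vadd_eq_add]
    module
  have := le_of_convex_epiSet hw (hM z ⟨hzB, hzS⟩) (hM (σ z) ⟨hσB z hzB, hσzS⟩)
    (t₁ := 2⁻¹) (t₂ := 2⁻¹) (by norm_num) (by norm_num) (by norm_num)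
  rwa [hmid, ← add_mul, show (2⁻¹ + 2⁻¹ : ℝ) = 1 by norm_num, one_mul] at this

lemma volume_closedBall_diff_le_volume_sublevel (hw : Convex ℝ (epiSet w)) {L M : ℝ}
    (hx₀ : w x₀ ≤ L) (hM : ∀ x ∈ closedBall x₀ r \ S, w x ≤ M) :
    ENNReal.ofReal ((2⁻¹ : ℝ) ^ n) * volume (closedBall x₀ r \ S) ≤
      volume (closedBall x₀ r ∩ {x | w x ≤ ((L + M) / 2 : ℝ)}) := by
  set τ := AffineMap.homothety x₀ (2⁻¹ : ℝ)
  have himage : τ '' (closedBall x₀ r \ S) ⊆ closedBall x₀ r ∩ {x | w x ≤ ((L + M) / 2 : ℝ)} := by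
    rintro _ ⟨z, ⟨hzB, hzS⟩, rfl⟩
    refine ⟨?_, ?_⟩
    · have hr : 0 ≤ r := dist_nonneg.trans hzB
      rw [mem_closedBall] at hzB ⊢
      rw [dist_homothety_center, Real.norm_eq_abs, dist_comm]
      nlinarith [abs_of_pos (show (0 : ℝ) < 2⁻¹ by norm_num)]
    · have hτz : τ z = (2⁻¹ : ℝ) • x₀ + (2⁻¹ : ℝ) • z := by
        simp only [τ, AffineMap.homothety_apply, vsub_eq_sub, vadd_eq_add]
        module
      have := le_of_convex_epiSet hw hx₀ (hM z ⟨hzB, hzS⟩) (t₁ := 2⁻¹) (t₂ := 2⁻¹)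
        (by norm_num) (by norm_num) (by norm_num)
      rw [← hτz] at this
      exact this.trans (le_of_eq (by congr 1; ring))
  calc ENNReal.ofReal ((2⁻¹ : ℝ) ^ n) * volume (closedBall x₀ r \ S)
      = volume (τ '' (closedBall x₀ r \ S)) := by
        simp [τ, Measure.addHaar_image_homothety]
    _ ≤ _ := measure_mono himage

end Geometry

section ConvergenceAtCenter

variable {ζ : ℝ → ℝ} {n : ℕ} {u : ℕ → En n → EReal} {v : En n → EReal} {x₀ : En n} {r : ℝ}

lemma eventually_apply_le_of_tendsto_volume (hζ : StrictAnti ζ) (hζ0 : ∀ t, 0 ≤ ζ t)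
    (hu : ∀ k, Convex ℝ (epiSet (u k)))
    (hS : ∀ c > 0, Tendsto (fun k => volume {x | c ≤ |zeval ζ (u k x) - zeval ζ (v x)|})
      atTop (𝓝 0))
    (hr : 0 < r) {a M : ℝ} (haM : a < M) (hv : ∀ x ∈ closedBall x₀ r, v x ≠ ⊥ ∧ v x ≤ a) :
    ∀ᶠ k in atTop, u k x₀ ≤ M := by
  have hsmall := ENNReal.Tendsto.const_mul (hS _ (sub_pos.2 (hζ haM))) (a := 2) (by simp)
  rw [mul_zero] at hsmall
  filter_upwards [hsmall.eventually_lt_const (measure_closedBall_pos volume x₀ hr)]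
    with k hk
  exact le_of_le_on_closedBall_diff (hu k) hk fun x hx =>
    le_of_abs_zeval_sub_lt hζ.antitone hζ0 (hv x hx.1).1 (hv x hx.1).2 (not_le.1 hx.2)

lemma eventually_lt_apply_of_tendsto_volume (hζ : StrictAnti ζ) (hζ0 : ∀ t, 0 ≤ ζ t)
    (hu : ∀ k, Convex ℝ (epiSet (u k))) (hubot : ∀ k x, u k x ≠ ⊥)
    (hS : ∀ c > 0, Tendsto (fun k => volume {x | c ≤ |zeval ζ (u k x) - zeval ζ (v x)|})
      atTop (𝓝 0))
    (hr : 0 < r) {a' a L M : ℝ} (haM : a < M) (hLM : (L + M) / 2 < a')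
    (hv : ∀ x ∈ closedBall x₀ r, (a' : EReal) ≤ v x ∧ v x ≤ a) :
    ∀ᶠ k in atTop, (L : EReal) < u k x₀ := by
  set B := closedBall x₀ r
  set κ := ENNReal.ofReal ((2⁻¹ : ℝ) ^ n)
  have hκ : 0 < κ := ENNReal.ofReal_pos.2 (by positivity)
  have hB : 0 < volume B := measure_closedBall_pos volume x₀ hr
  have hBfin : volume B ≠ ⊤ := measure_closedBall_lt_top.ne
  have hlim : Tendsto (fun k => κ * (volume B -
      volume {x | ζ a - ζ M ≤ |zeval ζ (u k x) - zeval ζ (v x)|})) atTop (𝓝 (κ * volume B)) := by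
    have := ENNReal.Tendsto.const_mul (ENNReal.Tendsto.sub tendsto_const_nhds
      (hS _ (sub_pos.2 (hζ haM))) (Or.inl hBfin)) (a := κ) (Or.inr ENNReal.ofReal_ne_top)
    rwa [tsub_zero] at this
  filter_upwards [(hS _ (sub_pos.2 (hζ hLM))).eventually_lt hlim
    (ENNReal.mul_pos hκ.ne' hB.ne').bot_lt] with k hk
  by_contra! hL
  have hbad : B ∩ {x | u k x ≤ ((L + M) / 2 : ℝ)} ⊆
      {x | ζ ((L + M) / 2) - ζ a' ≤ |zeval ζ (u k x) - zeval ζ (v x)|} := fun x hx =>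
    sub_le_abs_zeval_sub hζ.antitone hζ0 (hubot k x) hx.2 (hv x hx.1).1
  have hgood : ∀ x ∈ B \ {x | ζ a - ζ M ≤ |zeval ζ (u k x) - zeval ζ (v x)|}, u k x ≤ M :=
    fun x hx => le_of_abs_zeval_sub_lt hζ.antitone hζ0
      (ne_bot_of_le_ne_bot (EReal.coe_ne_bot a') (hv x hx.1).1) (hv x hx.1).2 (not_le.1 hx.2)
  refine hk.not_ge ?_
  calc κ * (volume B - volume {x | ζ a - ζ M ≤ |zeval ζ (u k x) - zeval ζ (v x)|})
      ≤ κ * volume (B \ {x | ζ a - ζ M ≤ |zeval ζ (u k x) - zeval ζ (v x)|}) :=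
        mul_le_mul_right le_measure_sdiff κ
    _ ≤ volume (B ∩ {x | u k x ≤ ((L + M) / 2 : ℝ)}) :=
        volume_closedBall_diff_le_volume_sublevel (hu k) hL hgood
    _ ≤ _ := measure_mono hbad

end ConvergenceAtCenter

theorem statement3 (n : ℕ) (hn : 1 ≤ n) (p : ℝ) (hp : 1 ≤ p)
    (ζ : ℝ → ℝ) (hζpos : ∀ t, 0 < ζ t) (hζcont : Continuous ζ) (hζanti : StrictAnti ζ)
    (hmom : IntegrableOn (fun t => ζ t ^ p * t ^ (n - 1)) (Set.Ioi (0:ℝ)))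
    (u : ℕ → En n → EReal) (v : En n → EReal)
    (hu : ∀ k, ConvCd n (u k)) (hv : ConvCd n v)
    (hconv : Tendsto (fun k => ∫ x : En n, |zeval ζ (u k x) - zeval ζ (v x)| ^ p)
      atTop (𝓝 0)) :
    ∀ x₀ ∈ interior {x | v x ≠ ⊤}, Tendsto (fun k => u k x₀) atTop (𝓝 (v x₀)) := by
  intro x₀ hx₀
  have hζ0 : ∀ t, 0 ≤ ζ t := fun t => (hζpos t).le
  have huconv : ∀ k, Convex ℝ (epiSet (u k)) := fun k => (hu k).1.2.2.2.1
  have hS : ∀ c > 0, Tendsto (fun k => volume {x | c ≤ |zeval ζ (u k x) - zeval ζ (v x)|})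
      atTop (𝓝 0) := fun c hc =>
    tendsto_measure_le_abs_of_tendsto_integral_rpow (by linarith) (fun k =>
      integrable_abs_zeval_sub_rpow hn (by linarith) hζcont hζanti.antitone hζ0 hmom (hu k).1 hv.1)
      hconv hc
  obtain ⟨A, hA⟩ : ∃ A : ℝ, v x₀ = A :=
    ⟨_, (EReal.coe_toReal (interior_subset hx₀) (hv.1.1 x₀)).symm⟩
  have hcont : Tendsto v (𝓝 x₀) (𝓝 (A : EReal)) :=
    hA ▸ continuousAt_of_convex_epiSet hv.1.1 hv.1.2.2.2.1 hx₀
  rw [hA]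
  refine EReal.tendsto_coe_of_forall_eventually fun ε hε => ?_
  obtain ⟨r, hr, hB⟩ := nhds_basis_closedBall.eventually_iff.1 <| hcont.eventually <|
    Icc_mem_nhds (EReal.coe_lt_coe_iff.2 (by linarith : A - ε / 8 < A))
      (EReal.coe_lt_coe_iff.2 (by linarith : A < A + ε / 8))
  have hvbot : ∀ x ∈ closedBall x₀ r, v x ≠ ⊥ := fun x hx =>
    ne_bot_of_le_ne_bot (EReal.coe_ne_bot _) (hB hx).1
  filter_upwards [eventually_lt_apply_of_tendsto_volume hζanti hζ0 huconv (fun k => (hu k).1.1) hS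
      hr (L := A - ε) (M := A + ε / 2) (by linarith) (by linarith) fun x hx => hB hx,
    eventually_apply_le_of_tendsto_volume hζanti hζ0 huconv hS hr (M := A + ε / 2) (by linarith)
      fun x hx => ⟨hvbot x hx, (hB hx).2⟩] with k hlower hupper
  exact ⟨hlower, hupper.trans_lt (EReal.coe_lt_coe_iff.2 (by linarith))⟩
end
end

section
/- (Selection theorem) Let u_k ∈ Conv_c(ℝⁿ) be a sequence. If there exist a > 0 and b, m ∈ ℝ such that min_{x∈ℝⁿ} u_k(x) ≤ m and u_k(x) ≥ a|x| + b for every x ∈ ℝⁿ and every k ∈ ℕ, then there exists a subsequence u_{k_j} that epi-converges to a function u ∈ Conv_c(ℝⁿ). If furthermore for every a > 0 there exists b ∈ ℝ (possibly depending on a) such that u_k(x) ≥ a|x| + b for all x ∈ ℝⁿ and all k, then the limit u is super-coercive, i.e., u ∈ Conv_s(ℝⁿ). -/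
open MeasureTheory Filter Topology Set
open scoped Classical ENNReal

noncomputable section

/-! The limit is the Γ-liminf `v x = sup_{U ∈ 𝓝 x} liminf_j inf_U u_j`. It satisfies the liminf
inequality along every sequence, is lower semicontinuous, and lies above every continuous common
minorant such as `a ‖x‖ + b`. Since `ℝⁿ` has a countable basis and `EReal` is compact, some
subsequence makes `inf_V u_j` converge on every basic open set `V`; along it the limsup of
`inf_U u_j` is at most `v x` as well, and this yields recovery sequences. Convexity passes to the
limit through recovery sequences, coercivity and super-coercivity through the affine minorants,
and properness through a limit point of the near-minimizers, which the cone bound keeps in a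
ball. -/

open TopologicalSpace

section GammaLiminf

variable {X : Type*} [TopologicalSpace X]

def gammaLiminf (w : ℕ → X → EReal) (x : X) : EReal :=
  ⨆ U ∈ 𝓝 x, liminf (fun j => ⨅ y ∈ U, w j y) atTop

variable {w : ℕ → X → EReal}

theorem gammaLiminf_le_liminf {x : X} {y : ℕ → X} (hy : Tendsto y atTop (𝓝 x)) :
    gammaLiminf w x ≤ liminf (fun j => w j (y j)) atTop :=
  iSup₂_le fun _ hU => liminf_le_liminf <| (hy.eventually_mem hU).mono fun _ hj => biInf_le _ hj

theorem liminf_iInf_le_gammaLiminf {x : X} {U : Set X} (hU : U ∈ 𝓝 x) :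
    liminf (fun j => ⨅ y ∈ U, w j y) atTop ≤ gammaLiminf w x :=
  le_iSup₂ (f := fun U (_ : U ∈ 𝓝 x) => liminf (fun j => ⨅ y ∈ U, w j y) atTop) U hU

theorem lowerSemicontinuous_gammaLiminf : LowerSemicontinuous (gammaLiminf w) := by
  intro x c hc
  obtain ⟨U, hU, hcU⟩ := lt_biSup_iff.mp hc
  obtain ⟨V, hVU, hV, hxV⟩ := mem_nhds_iff.mp hU
  filter_upwards [hV.mem_nhds hxV] with x' hx'
  calc c < liminf (fun j => ⨅ y ∈ U, w j y) atTop := hcU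
    _ ≤ liminf (fun j => ⨅ y ∈ V, w j y) atTop :=
      liminf_le_liminf (Eventually.of_forall fun _ => biInf_mono hVU)
    _ ≤ gammaLiminf w x' := liminf_iInf_le_gammaLiminf (hV.mem_nhds hx')

theorem le_gammaLiminf {g : X → EReal} (hg : LowerSemicontinuous g) (hgw : ∀ j x, g x ≤ w j x)
    (x : X) : g x ≤ gammaLiminf w x := by
  refine le_of_forall_lt_imp_le_of_dense fun c hc => ?_
  refine le_trans ?_ (liminf_iInf_le_gammaLiminf (hg x c hc))
  exact le_liminf_of_le (by isBoundedDefault) <|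
    Eventually.of_forall fun j => le_iInf₂ fun y hy => hy.le.trans (hgw j y)

theorem limsup_iInf_le_gammaLiminf {𝓑 : Set (Set X)} (h𝓑 : IsTopologicalBasis 𝓑)
    (hconv : ∀ V ∈ 𝓑, ∃ L, Tendsto (fun j => ⨅ y ∈ V, w j y) atTop (𝓝 L))
    {x : X} {U : Set X} (hU : U ∈ 𝓝 x) :
    limsup (fun j => ⨅ y ∈ U, w j y) atTop ≤ gammaLiminf w x := by
  obtain ⟨V, hV𝓑, hxV, hVU⟩ := h𝓑.mem_nhds_iff.mp hU
  obtain ⟨L, hL⟩ := hconv V hV𝓑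
  calc limsup (fun j => ⨅ y ∈ U, w j y) atTop
      ≤ limsup (fun j => ⨅ y ∈ V, w j y) atTop :=
        limsup_le_limsup (Eventually.of_forall fun _ => biInf_mono hVU)
    _ = liminf (fun j => ⨅ y ∈ V, w j y) atTop := hL.limsup_eq.trans hL.liminf_eq.symm
    _ ≤ gammaLiminf w x := liminf_iInf_le_gammaLiminf ((h𝓑.isOpen hV𝓑).mem_nhds hxV)

end GammaLiminf

theorem exists_seq_eventually_mem_of_antitone {α : Type*} [Nonempty α] {S : ℕ → ℕ → Set α}
    (hS : ∀ j, Antitone fun k => S k j) (h : ∀ k, ∀ᶠ j in atTop, (S k j).Nonempty) :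
    ∃ y : ℕ → α, ∀ k, ∀ᶠ j in atTop, y j ∈ S k j := by
  let g : ℕ → ℕ := fun j => Nat.findGreatest (fun k => (S k j).Nonempty) j
  refine ⟨fun j => if h : (S (g j) j).Nonempty then h.some else Classical.arbitrary α,
    fun k => ?_⟩
  filter_upwards [h k, eventually_ge_atTop k] with j hkj hk
  have hg : (S (g j) j).Nonempty := Nat.findGreatest_spec (P := fun k => (S k j).Nonempty) hk hkj
  simp only [dif_pos hg]
  exact hS j (Nat.le_findGreatest hk hkj) hg.some_mem

theorem exists_seq_tendsto_limsup_le {X : Type*} [TopologicalSpace X] [FirstCountableTopology X]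
    {w : ℕ → X → EReal} {x : X} {t : EReal}
    (h : ∀ U ∈ 𝓝 x, limsup (fun j => ⨅ y ∈ U, w j y) atTop ≤ t) :
    ∃ y : ℕ → X, Tendsto y atTop (𝓝 x) ∧ limsup (fun j => w j (y j)) atTop ≤ t := by
  rcases (le_top : t ≤ ⊤).eq_or_lt with rfl | ht
  · exact ⟨fun _ => x, tendsto_const_nhds, le_top⟩
  obtain ⟨U, hU⟩ := (𝓝 x).exists_antitone_basis
  obtain ⟨c, hc_anti, hc_gt, hc_lim⟩ := exists_seq_strictAnti_tendsto' ht
  have hne : ∀ k, ∀ᶠ j in atTop, (U k ∩ {z | w j z < c k}).Nonempty := fun k => by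
    filter_upwards [eventually_lt_of_limsup_lt ((h _ (hU.mem k)).trans_lt (hc_gt k).1)]
      with j hj
    exact lt_biInf_iff.mp hj
  have : Nonempty X := ⟨x⟩
  obtain ⟨y, hy⟩ := exists_seq_eventually_mem_of_antitone
    (fun j _ _ hkl => inter_subset_inter (hU.antitone hkl)
      fun _ hz => hz.trans_le (hc_anti.antitone hkl)) hne
  refine ⟨y, hU.1.tendsto_right_iff.mpr fun k _ => (hy k).mono fun _ hj => hj.1, ?_⟩
  exact ge_of_tendsto hc_lim <| Eventually.of_forall fun k =>
    limsup_le_of_le (by isBoundedDefault) ((hy k).mono fun _ hj => hj.2.le)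

theorem exists_subseq_epiTendsto_gammaLiminf {n : ℕ} (u : ℕ → En n → EReal) :
    ∃ φ : ℕ → ℕ, StrictMono φ ∧
      EpiTendsto (fun j => u (φ j)) (gammaLiminf fun j => u (φ j)) := by
  have : Countable (countableBasis (En n)) := (countable_countableBasis _).to_subtype
  obtain ⟨L, -, φ, hφ, hL⟩ := isCompact_univ.tendsto_subseq
    (x := fun k (V : countableBasis (En n)) => ⨅ y ∈ (V : Set (En n)), u k y)
    fun _ => mem_univ _
  refine ⟨φ, hφ, fun x => ⟨fun _ hy => gammaLiminf_le_liminf hy,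
    exists_seq_tendsto_limsup_le fun _ hU =>
      limsup_iInf_le_gammaLiminf (isBasis_countableBasis _) ?_ hU⟩⟩
  exact fun V hV => ⟨L ⟨V, hV⟩, tendsto_pi_nhds.mp hL ⟨V, hV⟩⟩

theorem convex_epiSet_of_epiTendsto {n : ℕ} {w : ℕ → En n → EReal} {v : En n → EReal}
    (hw : ∀ j, Convex ℝ (epiSet (w j))) (hv : EpiTendsto w v) : Convex ℝ (epiSet v) := by
  rintro ⟨x₁, t₁⟩ (h₁ : v x₁ ≤ t₁) ⟨x₂, t₂⟩ (h₂ : v x₂ ≤ t₂) θ μ hθ hμ hθμ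
  show v (θ • x₁ + μ • x₂) ≤ ((θ * t₁ + μ * t₂ : ℝ) : EReal)
  obtain ⟨y₁, hy₁, hlim₁⟩ := (hv x₁).2
  obtain ⟨y₂, hy₂, hlim₂⟩ := (hv x₂).2
  refine EReal.le_of_forall_lt_iff_le.mp fun s hs => ?_
  set ε := s - (θ * t₁ + μ * t₂)
  have hε : 0 < ε := sub_pos.mpr (EReal.coe_lt_coe_iff.mp hs)
  have hev : ∀ {y : ℕ → En n} {x} {t : ℝ}, limsup (fun j => w j (y j)) atTop ≤ v x → v x ≤ t →
      ∀ᶠ j in atTop, (y j, t + ε) ∈ epiSet (w j) := fun hlim hvx =>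
    (eventually_lt_of_limsup_lt ((hlim.trans hvx).trans_lt
      (EReal.coe_lt_coe_iff.mpr (lt_add_of_pos_right _ hε)))).mono fun _ hj => hj.le
  calc v (θ • x₁ + μ • x₂) ≤ liminf (fun j => w j (θ • y₁ j + μ • y₂ j)) atTop :=
        (hv _).1 _ ((hy₁.const_smul θ).add (hy₂.const_smul μ))
    _ ≤ s := by
      refine liminf_le_of_frequently_le' (Eventually.frequently ?_)
      filter_upwards [hev hlim₁ h₁, hev hlim₂ h₂] with j hj₁ hj₂
      have hs : θ * (t₁ + ε) + μ * (t₂ + ε) = s := by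
        linear_combination (s - (θ * t₁ + μ * t₂)) * hθμ
      have hmem := hw j hj₁ hj₂ hθ hμ hθμ
      rwa [Prod.smul_mk, Prod.smul_mk, Prod.mk_add_mk, smul_eq_mul, smul_eq_mul, hs] at hmem

theorem tendsto_cocompact_top_of_affine_le {E : Type*} [NormedAddCommGroup E] [ProperSpace E]
    {v : E → EReal} {a b : ℝ} (ha : 0 < a) (hv : ∀ x, ((a * ‖x‖ + b : ℝ) : EReal) ≤ v x) :
    Tendsto v (cocompact E) (𝓝 ⊤) :=
  tendsto_nhds_top_mono (EReal.tendsto_coe_atTop.comp <| tendsto_atTop_add_const_right _ b <|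
    tendsto_norm_cocompact_atTop.const_mul_atTop ha) (Eventually.of_forall hv)

theorem superCoercive_of_forall_affine_le {n : ℕ} {v : En n → EReal}
    (hv : ∀ a > 0, ∃ b : ℝ, ∀ x, ((a * ‖x‖ + b : ℝ) : EReal) ≤ v x) : SuperCoercive v := by
  intro M
  obtain ⟨b, hb⟩ := hv (|M| + 1) (by positivity)
  filter_upwards [tendsto_norm_cocompact_atTop.eventually_ge_atTop (-b)] with x hx
  refine le_trans (EReal.coe_le_coe_iff.mpr ?_) (hb x)
  nlinarith [mul_le_mul_of_nonneg_right (le_abs_self M) (norm_nonneg x)]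

theorem statement5 (n : ℕ) (u : ℕ → En n → EReal) (hu : ∀ k, ConvC n (u k))
    (a : ℝ) (ha : 0 < a) (b m : ℝ)
    (hmin : ∀ k, ∃ x, u k x ≤ (m : EReal))
    (hcone : ∀ k, ∀ x, ((a * ‖x‖ + b : ℝ) : EReal) ≤ u k x) :
    ∃ φ : ℕ → ℕ, StrictMono φ ∧ ∃ v : En n → EReal, ConvC n v ∧
      EpiTendsto (fun j => u (φ j)) v ∧
      ((∀ a' : ℝ, 0 < a' → ∃ b' : ℝ, ∀ k, ∀ x, ((a' * ‖x‖ + b' : ℝ) : EReal) ≤ u k x) →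
        SuperCoercive v) := by
  choose xs hxs using hmin
  have hxs_mem : ∀ k, xs k ∈ Metric.closedBall (0 : En n) ((m - b) / a) := fun k => by
    have : a * ‖xs k‖ + b ≤ m := EReal.coe_le_coe_iff.mp ((hcone k (xs k)).trans (hxs k))
    rw [mem_closedBall_zero_iff, le_div_iff₀ ha]
    linarith
  obtain ⟨x₀, -, ψ, hψ, hxs_lim⟩ := (isCompact_closedBall _ _).tendsto_subseq hxs_mem
  obtain ⟨φ, hφ, hepi⟩ := exists_subseq_epiTendsto_gammaLiminf fun j => u (ψ j)
  set v := gammaLiminf fun j => u (ψ (φ j))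
  have hv_affine : ∀ a b : ℝ, (∀ k x, ((a * ‖x‖ + b : ℝ) : EReal) ≤ u k x) →
      ∀ x, ((a * ‖x‖ + b : ℝ) : EReal) ≤ v x := fun a b h =>
    le_gammaLiminf (continuous_coe_real_ereal.comp (by fun_prop)).lowerSemicontinuous
      fun j => h (ψ (φ j))
  have hv_x₀ : v x₀ ≤ m := ((hepi x₀).1 _ (hxs_lim.comp hφ.tendsto_atTop)).trans <|
    liminf_le_of_frequently_le' (Frequently.of_forall fun j => hxs _)
  refine ⟨ψ ∘ φ, hψ.comp hφ, v, ⟨fun x => ?_, ⟨x₀, ?_⟩, lowerSemicontinuous_gammaLiminf,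
    convex_epiSet_of_epiTendsto (fun j => (hu _).2.2.2.1) hepi,
    tendsto_cocompact_top_of_affine_le ha (hv_affine a b hcone)⟩, hepi,
    fun h => superCoercive_of_forall_affine_le fun a' ha' => (h a' ha').imp (hv_affine a')⟩
  · exact ((EReal.bot_lt_coe _).trans_le (hv_affine a b hcone x)).ne'
  · exact (hv_x₀.trans_lt (EReal.coe_lt_top m)).ne
end
end

section
/- Let n ≥ 1 and let ζ : ℝ → (0,∞) be continuous and strictly decreasing with ∫₀^∞ ζ(t) dt < ∞. If u_k, u ∈ Conv_c(ℝⁿ) are such that δ_ζ^H(u_k,u) = ∫₀^∞ d̂_H({x : ζ(u_k(x)) ≥ s}, {x : ζ(u(x)) ≥ s}) ds → 0, then u_k epi-converges to u as k → ∞; moreover min_{x∈ℝⁿ} u_k(x) → min_{x∈ℝⁿ} u(x). -/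
open MeasureTheory Filter Topology Set
open scoped Classical ENNReal

noncomputable section

/-!
For `s ∈ (ζ t, ζ t']` the superlevel set `{ζ ∘ w ≥ s}` lies between the sublevel sets `{w ≤ t'}`
and `{w ≤ t}`. Hence if a point of `{u ≤ t'}` is farther than `ε ≤ 1` from `{v ≤ t}`, the
integrand of `δ_ζ^H(u, v)` is at least `ε` on an interval of length `ζ t' - ζ t`. So
`δ_ζ^H(u_k, v) → 0` forces the sublevel sets of `u_k` to be eventually close to slightly larger
sublevel sets of `v`, and vice versa. The first direction gives the liminf inequality (as `{v ≤ t}`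
is closed) and, since `{v ≤ t}` is empty below `min v`, the lower bound on `min u_k`; the second
gives recovery sequences, found among points of the epigraphs of `u_k`.

The integrand has to be shown integrable, as a Bochner integral of a non-integrable function is `0`
by convention. It is measurable because the superlevel sets decrease in `s`. By convexity and
coercivity a point of `{ζ ∘ w ≥ s}` lies within `R · |{t > min w - 1 | ζ t ≥ s}|` of a minimiser
of `w`, and by the layer-cake formula this length is integrable in `s`, with integral
`∫_{min w - 1}^∞ ζ`.
-/

open Metric Bornology TopologicalSpace

section Preliminaries

lemma Antitone.measurable_infDist {X : Type*} [PseudoMetricSpace X] {K : ℝ → Set X}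
    (hK : Antitone K) (x : X) : Measurable fun s => infDist x (K s) := by
  refine measurable_of_Ioi fun a => Set.OrdConnected.measurableSet ⟨?_⟩
  intro s hs s'' hs'' s' hs'
  rcases (K s').eq_empty_or_nonempty with h | h
  · have hK'' : K s'' = ∅ := subset_eq_empty (hK hs'.2) h
    have : a < 0 := by simpa [hK''] using hs''
    exact this.trans_le infDist_nonneg
  · exact lt_of_lt_of_le hs (infDist_le_infDist_of_subset (hK hs'.1) h)

lemma hausdorffDist_eq_iSup_denseSeq {X : Type*} [PseudoMetricSpace X] [SeparableSpace X]
    [Nonempty X] {K L : Set X} (hK : K.Nonempty) (hL : L.Nonempty) (hKb : IsBounded K)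
    (hLb : IsBounded L) :
    hausdorffDist K L = ⨆ i, |infDist (denseSeq X i) K - infDist (denseSeq X i) L| := by
  have hKL := hausdorffEDist_ne_top_of_nonempty_of_bounded hK hL hKb hLb
  have hLK := hausdorffEDist_ne_top_of_nonempty_of_bounded hL hK hLb hKb
  have hle : ∀ x, |infDist x K - infDist x L| ≤ hausdorffDist K L := fun x => abs_le.2
    ⟨by linarith [infDist_le_infDist_add_hausdorffDist (x := x) hKL],
      by linarith [hausdorffDist_comm (s := K) (t := L),
        infDist_le_infDist_add_hausdorffDist (x := x) hLK]⟩
  have hbdd : BddAbove (range fun i => |infDist (denseSeq X i) K - infDist (denseSeq X i) L|) :=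
    ⟨_, forall_mem_range.2 fun i => hle _⟩
  set S := ⨆ i, |infDist (denseSeq X i) K - infDist (denseSeq X i) L|
  have hS : ∀ x, |infDist x K - infDist x L| ≤ S := fun x =>
    (denseRange_denseSeq X).induction_on x
      (isClosed_le (((continuous_infDist_pt K).sub (continuous_infDist_pt L)).abs) continuous_const)
      (le_ciSup hbdd)
  have hS0 : 0 ≤ S := (abs_nonneg _).trans (hS (Classical.arbitrary X))
  refine le_antisymm (hausdorffDist_le_of_infDist hS0 (fun x hx => ?_) fun x hx => ?_)
    (ciSup_le fun i => hle _)
  · simpa [infDist_zero_of_mem hx, abs_of_nonneg infDist_nonneg] using hS x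
  · simpa [infDist_zero_of_mem hx, abs_of_nonneg infDist_nonneg] using hS x

end Preliminaries

section LayerCake

variable {ζ : ℝ → ℝ}

lemma Continuous.integrableOn_Ioi_of_integrableOn_Ioi (hζ : Continuous ζ) {b : ℝ}
    (h : IntegrableOn ζ (Ioi b)) (a : ℝ) : IntegrableOn ζ (Ioi a) := by
  refine ((hζ.integrableOn_Ioc (a := min a b) (b := b)).union h).mono_set ?_
  rw [Ioc_union_Ioi_eq_Ioi (min_le_right a b)]
  exact Ioi_subset_Ioi (min_le_left a b)

lemma exists_lt_of_integrableOn_Ioi (hζ : IntegrableOn ζ (Ioi 0)) {s : ℝ} (hs : 0 < s) :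
    ∃ t, ζ t < s := by
  by_contra! h
  have hfin := hζ.measure_ge_lt_top hs
  simp [h, Real.volume_Ioi] at hfin

def superlevelVolume (ζ : ℝ → ℝ) (a s : ℝ) : ℝ := (volume.restrict (Ioi a)).real {t | s ≤ ζ t}

lemma integrableOn_superlevelVolume (hζ0 : ∀ t, 0 ≤ ζ t) {a : ℝ} (hζ : IntegrableOn ζ (Ioi a)) :
    IntegrableOn (superlevelVolume ζ a) (Ioi 0) := by
  set μ := volume.restrict (Ioi a)
  have hanti : Antitone fun s => μ {t | s ≤ ζ t} := fun _ _ h => measure_mono fun _ ht => h.trans ht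
  refine ⟨hanti.measurable.ennreal_toReal.aestronglyMeasurable, ?_⟩
  rw [hasFiniteIntegral_iff_ofReal (f := superlevelVolume ζ a)
    (Eventually.of_forall fun _ => measureReal_nonneg)]
  calc ∫⁻ s in Ioi 0, ENNReal.ofReal (superlevelVolume ζ a s)
      ≤ ∫⁻ s in Ioi 0, μ {t | s ≤ ζ t} := lintegral_mono fun _ => ENNReal.ofReal_toReal_le
    _ = ∫⁻ t, ENNReal.ofReal (ζ t) ∂μ :=
        (lintegral_eq_lintegral_meas_le μ (Eventually.of_forall hζ0) hζ.aemeasurable).symm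
    _ < ⊤ := hζ.lintegral_lt_top

lemma sub_le_superlevelVolume (hζ : Antitone ζ) {a s t : ℝ} (hint : IntegrableOn ζ (Ioi a))
    (hs : 0 < s) (hst : s ≤ ζ t) : t - a ≤ superlevelVolume ζ a s :=
  calc t - a ≤ volume.real (Ioc a t) := by rw [Real.volume_real_Ioc]; exact le_max_left _ _
    _ = (volume.restrict (Ioi a)).real (Ioc a t) := by
        rw [measureReal_restrict_apply measurableSet_Ioc, Ioc_inter_Ioi, max_self]
    _ ≤ superlevelVolume ζ a s :=
        measureReal_mono (fun t' ht' => hst.trans (hζ ht'.2)) (hint.measure_ge_lt_top hs).ne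

end LayerCake

section SuperlevelSets

variable {n : ℕ} {ζ : ℝ → ℝ} {w : En n → EReal}

def superlevelSet (ζ : ℝ → ℝ) (w : En n → EReal) (s : ℝ) : Set (En n) := {x | s ≤ zeval ζ (w x)}

lemma superlevelSet_antitone : Antitone (superlevelSet ζ w) := fun _ _ h _ hx => h.trans hx

lemma mem_superlevelSet_iff {s : ℝ} (hs : 0 < s) {x : En n} :
    x ∈ superlevelSet ζ w s ↔ w x ≠ ⊤ ∧ s ≤ ζ (w x).toReal := by
  by_cases hx : w x = ⊤ <;> simp [superlevelSet, zeval, hx, hs.not_ge]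

lemma mem_superlevelSet_of_le (hζ : Antitone ζ) {x : En n} (hx : w x ≠ ⊥) {s t : ℝ}
    (hxt : w x ≤ t) (hst : s ≤ ζ t) : x ∈ superlevelSet ζ w s := by
  have hx' : w x ≠ ⊤ := ne_top_of_le_ne_top (EReal.coe_ne_top t) hxt
  show s ≤ zeval ζ (w x)
  rw [zeval, if_neg hx']
  exact hst.trans (hζ (EReal.toReal_le_toReal hxt hx (EReal.coe_ne_top t)))

lemma superlevelSet_subset_sublevel (hζ : StrictAnti ζ) {s t : ℝ} (hs : 0 < s) (hts : ζ t < s) :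
    superlevelSet ζ w s ⊆ {x | w x ≤ t} := by
  intro x hx
  obtain ⟨hx, hsx⟩ := (mem_superlevelSet_iff hs).1 hx
  exact (EReal.le_coe_toReal hx).trans
    (EReal.coe_le_coe_iff.2 (hζ.lt_iff_gt.1 (hts.trans_le hsx)).le)

end SuperlevelSets

namespace ConvC

variable {n : ℕ} {w : En n → EReal}

lemma isCompact_sublevel (hw : ConvC n w) (t : ℝ) : IsCompact {x | w x ≤ t} := by
  obtain ⟨K, hK, hKt⟩ := mem_cocompact.1 (hw.2.2.2.2 (Ioi_mem_nhds (EReal.coe_lt_top t)))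
  exact hK.of_isClosed_subset (hw.2.2.1.isClosed_preimage t)
    fun x hx => by_contra fun hxK => not_lt.2 hx (show (t : EReal) < w x from hKt hxK)

lemma exists_forall_le (hw : ConvC n w) :
    ∃ (z : En n) (m : ℝ), w z = m ∧ ∀ x, (m : EReal) ≤ w x := by
  obtain ⟨x₀, hx₀⟩ := hw.2.1
  set S := {x | w x ≤ (w x₀).toReal}
  obtain ⟨z, hzS, hz⟩ := (hw.2.2.1.lowerSemicontinuousOn _).exists_isMinOn
    ⟨x₀, EReal.le_coe_toReal hx₀⟩ (hw.isCompact_sublevel _)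
  refine ⟨z, (w z).toReal, (EReal.coe_toReal (ne_top_of_le_ne_top (EReal.coe_ne_top _) hzS)
    (hw.1 z)).symm, fun x => ?_⟩
  rw [EReal.coe_toReal (ne_top_of_le_ne_top (EReal.coe_ne_top _) hzS) (hw.1 z)]
  by_cases hx : x ∈ S
  · exact hz hx
  · exact hzS.trans (not_le.1 hx).le

lemma isBounded_superlevelSet (hw : ConvC n w) {ζ : ℝ → ℝ} (hζ : StrictAnti ζ)
    (hmom : IntegrableOn ζ (Ioi 0)) {s : ℝ} (hs : 0 < s) : IsBounded (superlevelSet ζ w s) := by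
  obtain ⟨t, ht⟩ := exists_lt_of_integrableOn_Ioi hmom hs
  exact (hw.isCompact_sublevel t).isBounded.subset (superlevelSet_subset_sublevel hζ hs ht)

/-- The sublevel set `{w ≤ m + 1}` is bounded, and convexity along rays from `z` turns this into
linear growth. -/
lemma exists_norm_sub_le (hw : ConvC n w) {z : En n} {m : ℝ} (hz : w z = m)
    (hmin : ∀ x, (m : EReal) ≤ w x) :
    ∃ R > 0, ∀ x (t : ℝ), w x ≤ t → ‖x - z‖ ≤ R * (t - (m - 1)) := by
  obtain ⟨R, hR⟩ := (hw.isCompact_sublevel (m + 1)).isBounded.subset_ball z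
  have hRpos : 0 < R := pos_of_mem_ball (hR (show w z ≤ ↑(m + 1) by
    rw [hz]; exact EReal.coe_le_coe_iff.2 (by linarith)))
  refine ⟨R, hRpos, fun x t hxt => ?_⟩
  have hmt : m ≤ t := EReal.coe_le_coe_iff.1 ((hmin x).trans hxt)
  rcases lt_or_ge ‖x - z‖ R with hd | hd
  · nlinarith
  set d := ‖x - z‖
  have hd0 : 0 < d := hRpos.trans_le hd
  set l := R / d
  have hl : l ∈ Icc (0 : ℝ) 1 := ⟨by positivity, (div_le_one hd0).2 hd⟩
  have hmem : ((z, m) : En n × ℝ) + l • ((x, t) - (z, m)) ∈ epiSet w :=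
    hw.2.2.2.1.add_smul_sub_mem (show w z ≤ m from hz.le) hxt hl
  have hout : z + l • (x - z) ∉ ball z R := by
    rw [mem_ball, dist_eq_norm, add_sub_cancel_left, norm_smul, Real.norm_eq_abs,
      abs_of_nonneg hl.1, div_mul_cancel₀ R hd0.ne']
    exact lt_irrefl R
  have hlt : m + 1 < m + l * (t - m) := by
    by_contra! hle
    exact hout (hR ((show w (z + l • (x - z)) ≤ ↑(m + l * (t - m)) from hmem).trans
      (EReal.coe_le_coe_iff.2 hle)))
  have : d < R * (t - m) := by
    have h1 : 1 < R / d * (t - m) := by linarith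
    rwa [div_mul_eq_mul_div, one_lt_div hd0] at h1
  linarith

end ConvC

section HausdorffIntegrand

variable {n : ℕ}

lemma dhatH_comm (K L : Set (En n)) : dhatH K L = dhatH L K := by
  unfold dhatH
  split_ifs <;> simp_all [hausdorffDist_comm]

lemma deltaH_comm (ζ : ℝ → ℝ) (u v : En n → EReal) : deltaH ζ u v = deltaH ζ v u := by
  unfold deltaH
  simp_rw [dhatH_comm {x | _ ≤ zeval ζ (u x)}]

lemma dhatH_nonneg (K L : Set (En n)) : 0 ≤ dhatH K L := by
  unfold dhatH
  split_ifs
  · exact le_rfl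
  · exact le_max_of_le_left zero_le_one
  · exact le_max_of_le_left zero_le_one
  · exact hausdorffDist_nonneg

lemma dhatH_le_of_subset_closedBall {K L : Set (En n)} {r : ℝ} (hr : 0 ≤ r)
    (hK : K ⊆ closedBall 0 r) (hL : L ⊆ closedBall 0 r) : dhatH K L ≤ max 1 (2 * r) := by
  have hd : ∀ {A B : Set (En n)}, A.Nonempty → B.Nonempty → A ⊆ closedBall 0 r →
      B ⊆ closedBall 0 r → hausdorffDist A B ≤ 2 * r := fun hA hB hAr hBr =>
    (hausdorffDist_le_diam hA (isBounded_closedBall.subset hAr) hB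
      (isBounded_closedBall.subset hBr)).trans
      ((diam_mono (union_subset hAr hBr) isBounded_closedBall).trans (diam_closedBall hr))
  have h0 : {(0 : En n)} ⊆ closedBall 0 r := singleton_subset_iff.2 (mem_closedBall_self hr)
  unfold dhatH
  split_ifs with hK0 hL0 hL0
  · positivity
  · exact max_le_max le_rfl (hd (nonempty_iff_ne_empty.2 hL0) (singleton_nonempty 0) hL h0)
  · exact max_le_max le_rfl (hd (nonempty_iff_ne_empty.2 hK0) (singleton_nonempty 0) hK h0)
  · exact (hd (nonempty_iff_ne_empty.2 hK0) (nonempty_iff_ne_empty.2 hL0) hK hL).trans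
      (le_max_right _ _)

lemma dhatH_le_of_subset_closedBall_of_one_le {K L : Set (En n)} {z₁ z₂ : En n}
    {R₁ R₂ p₁ p₂ : ℝ} (hR₁ : 0 ≤ R₁) (hR₂ : 0 ≤ R₂) (hp₁ : 0 ≤ p₁) (hp₂ : 0 ≤ p₂)
    (hK : K ⊆ closedBall z₁ (R₁ * p₁)) (hK₁ : K.Nonempty → 1 ≤ p₁)
    (hL : L ⊆ closedBall z₂ (R₂ * p₂)) (hL₁ : L.Nonempty → 1 ≤ p₂) :
    dhatH K L ≤ (1 + 2 * (‖z₁‖ + ‖z₂‖ + R₁ + R₂)) * (p₁ + p₂) := by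
  by_cases hempty : K = ∅ ∧ L = ∅
  · simp only [hempty.1, hempty.2, dhatH, if_true]
    positivity
  have hone : 1 ≤ p₁ + p₂ := by
    rcases not_and_or.1 hempty with h | h
    · linarith [hK₁ (nonempty_iff_ne_empty.2 h)]
    · linarith [hL₁ (nonempty_iff_ne_empty.2 h)]
  set r := ‖z₁‖ + R₁ * p₁ + (‖z₂‖ + R₂ * p₂)
  have hball : ∀ {A : Set (En n)} {z : En n} {ρ : ℝ}, A ⊆ closedBall z ρ → ‖z‖ + ρ ≤ r →
      A ⊆ closedBall 0 r := fun hA hρ =>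
    (hA.trans (closedBall_subset_closedBall' (by rw [dist_zero_right]; linarith)))
  have hKr := hball hK (by linarith [norm_nonneg z₂, mul_nonneg hR₂ hp₂])
  have hLr := hball hL (by linarith [norm_nonneg z₁, mul_nonneg hR₁ hp₁])
  refine (dhatH_le_of_subset_closedBall (by positivity) hKr hLr).trans (max_le ?_ ?_)
  · nlinarith [norm_nonneg z₁, norm_nonneg z₂]
  · nlinarith [mul_nonneg (norm_nonneg z₁) (sub_nonneg.2 hone),
      mul_nonneg (norm_nonneg z₂) (sub_nonneg.2 hone), mul_nonneg hR₁ hp₂, mul_nonneg hR₂ hp₁]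

lemma aestronglyMeasurable_dhatH {K L : ℝ → Set (En n)} (hK : Antitone K) (hL : Antitone L)
    {S : Set ℝ} (hS : MeasurableSet S) (hKb : ∀ s ∈ S, IsBounded (K s))
    (hLb : ∀ s ∈ S, IsBounded (L s)) :
    AEStronglyMeasurable (fun s => dhatH (K s) (L s)) (volume.restrict S) := by
  set D : Set (En n) → Set (En n) → ℝ := fun A B =>
    ⨆ i, |infDist (denseSeq (En n) i) A - infDist (denseSeq (En n) i) B|
  have hD : ∀ {A B : ℝ → Set (En n)}, Antitone A → Antitone B → Measurable fun s => D (A s) (B s) :=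
    fun hA hB => Measurable.iSup fun i =>
      ((hA.measurable_infDist _).sub (hB.measurable_infDist _)).abs
  have hempty : ∀ {A : ℝ → Set (En n)}, Antitone A → MeasurableSet {s | A s = ∅} := fun hA =>
    (IsUpperSet.ordConnected fun _ _ h hs => subset_eq_empty (hA h) hs).measurableSet
  have hG : Measurable fun s => if K s = ∅ then (if L s = ∅ then 0 else max 1 (D (L s) {0}))
      else if L s = ∅ then max 1 (D (K s) {0}) else D (K s) (L s) :=
    Measurable.ite (hempty hK)
      (Measurable.ite (hempty hL) measurable_const (measurable_const.max (hD hL antitone_const)))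
      (Measurable.ite (hempty hL) (measurable_const.max (hD hK antitone_const)) (hD hK hL))
  refine hG.aestronglyMeasurable.congr ((ae_restrict_mem hS).mono fun s hs => ?_)
  simp only [dhatH]
  split_ifs with hK0 hL0 hL0
  · rfl
  · rw [hausdorffDist_eq_iSup_denseSeq (nonempty_iff_ne_empty.2 hL0) (singleton_nonempty 0)
      (hLb s hs) isBounded_singleton]
  · rw [hausdorffDist_eq_iSup_denseSeq (nonempty_iff_ne_empty.2 hK0) (singleton_nonempty 0)
      (hKb s hs) isBounded_singleton]
  · rw [hausdorffDist_eq_iSup_denseSeq (nonempty_iff_ne_empty.2 hK0)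
      (nonempty_iff_ne_empty.2 hL0) (hKb s hs) (hLb s hs)]

end HausdorffIntegrand

section DeltaH

variable {n : ℕ} {ζ : ℝ → ℝ} {w w₁ w₂ : En n → EReal}

lemma norm_sub_le_of_mem_superlevelSet (hζ : Antitone ζ) {m : ℝ}
    (hint : IntegrableOn ζ (Ioi (m - 1))) (hmin : ∀ x, (m : EReal) ≤ w x) {z : En n} {R : ℝ}
    (hR : 0 ≤ R) (hgrowth : ∀ x (t : ℝ), w x ≤ t → ‖x - z‖ ≤ R * (t - (m - 1))) {s : ℝ}
    (hs : 0 < s) {x : En n} (hx : x ∈ superlevelSet ζ w s) :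
    ‖x - z‖ ≤ R * superlevelVolume ζ (m - 1) s ∧ 1 ≤ superlevelVolume ζ (m - 1) s := by
  obtain ⟨hx, hsx⟩ := (mem_superlevelSet_iff hs).1 hx
  have hmx : m ≤ (w x).toReal :=
    EReal.coe_le_coe_iff.1 ((hmin x).trans (EReal.le_coe_toReal hx))
  have hvol := sub_le_superlevelVolume hζ hint hs hsx
  exact ⟨(hgrowth x _ (EReal.le_coe_toReal hx)).trans (mul_le_mul_of_nonneg_left hvol hR),
    by linarith⟩

lemma integrableOn_dhatH_superlevelSet (hζpos : ∀ t, 0 < ζ t) (hζcont : Continuous ζ)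
    (hζanti : StrictAnti ζ) (hmom : IntegrableOn ζ (Ioi 0)) (h₁ : ConvC n w₁) (h₂ : ConvC n w₂) :
    IntegrableOn (fun s => dhatH (superlevelSet ζ w₁ s) (superlevelSet ζ w₂ s)) (Ioi 0) := by
  obtain ⟨z₁, m₁, hz₁, hmin₁⟩ := h₁.exists_forall_le
  obtain ⟨z₂, m₂, hz₂, hmin₂⟩ := h₂.exists_forall_le
  obtain ⟨R₁, hR₁, hgrowth₁⟩ := h₁.exists_norm_sub_le hz₁ hmin₁
  obtain ⟨R₂, hR₂, hgrowth₂⟩ := h₂.exists_norm_sub_le hz₂ hmin₂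
  have hint := hζcont.integrableOn_Ioi_of_integrableOn_Ioi hmom
  set φ₁ := superlevelVolume ζ (m₁ - 1)
  set φ₂ := superlevelVolume ζ (m₂ - 1)
  set C := 1 + 2 * (‖z₁‖ + ‖z₂‖ + R₁ + R₂)
  have hdom : IntegrableOn (fun s => C * (φ₁ s + φ₂ s)) (Ioi 0) :=
    ((integrableOn_superlevelVolume (fun t => (hζpos t).le) (hint _)).add
      (integrableOn_superlevelVolume (fun t => (hζpos t).le) (hint _))).const_mul C
  have hbound : ∀ s ∈ Ioi (0 : ℝ),
      dhatH (superlevelSet ζ w₁ s) (superlevelSet ζ w₂ s) ≤ C * (φ₁ s + φ₂ s) := by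
    intro s hs
    have hb₁ := fun x => norm_sub_le_of_mem_superlevelSet hζanti.antitone (hint _) hmin₁
      hR₁.le hgrowth₁ hs (x := x)
    have hb₂ := fun x => norm_sub_le_of_mem_superlevelSet hζanti.antitone (hint _) hmin₂
      hR₂.le hgrowth₂ hs (x := x)
    exact dhatH_le_of_subset_closedBall_of_one_le hR₁.le hR₂.le measureReal_nonneg
      measureReal_nonneg (fun x hx => mem_closedBall_iff_norm.2 (hb₁ x hx).1)
      (fun ⟨x, hx⟩ => (hb₁ x hx).2) (fun x hx => mem_closedBall_iff_norm.2 (hb₂ x hx).1)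
      (fun ⟨x, hx⟩ => (hb₂ x hx).2)
  refine hdom.mono' (aestronglyMeasurable_dhatH superlevelSet_antitone superlevelSet_antitone
    measurableSet_Ioi (fun s hs => h₁.isBounded_superlevelSet hζanti hmom hs)
    (fun s hs => h₂.isBounded_superlevelSet hζanti hmom hs)) ?_
  refine (ae_restrict_mem measurableSet_Ioi).mono fun s hs => ?_
  rw [Real.norm_eq_abs, abs_of_nonneg (dhatH_nonneg _ _)]
  exact hbound s hs

lemma le_dhatH_superlevelSet (hζ : StrictAnti ζ) {x₀ : En n} {t' t ε s : ℝ}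
    (hx₀ : w₁ x₀ ≤ t') (hx₀' : w₁ x₀ ≠ ⊥) (hfar : ∀ y, w₂ y ≤ t → ε < dist x₀ y) (hε : ε ≤ 1)
    (hs : s ∈ Ioc (ζ t) (ζ t')) (hs0 : 0 < s) (hb₁ : IsBounded (superlevelSet ζ w₁ s))
    (hb₂ : IsBounded (superlevelSet ζ w₂ s)) :
    ε ≤ dhatH (superlevelSet ζ w₁ s) (superlevelSet ζ w₂ s) := by
  have hx := mem_superlevelSet_of_le hζ.antitone hx₀' hx₀ hs.2
  unfold dhatH
  rw [if_neg (nonempty_iff_ne_empty.1 ⟨x₀, hx⟩)]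
  split_ifs with hL
  · exact hε.trans (le_max_left _ _)
  · have hLne := nonempty_iff_ne_empty.2 hL
    exact ((le_infDist hLne).2 fun y hy =>
      (hfar y (superlevelSet_subset_sublevel hζ hs0 hs.1 hy)).le).trans
      (infDist_le_hausdorffDist_of_mem hx
        (hausdorffEDist_ne_top_of_nonempty_of_bounded ⟨x₀, hx⟩ hLne hb₁ hb₂))

/-- Otherwise the integrand of `deltaH` would be at least `ε` on `(ζ t, ζ t']`. -/
lemma exists_dist_le_of_deltaH_lt (hζpos : ∀ t, 0 < ζ t) (hζcont : Continuous ζ)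
    (hζanti : StrictAnti ζ) (hmom : IntegrableOn ζ (Ioi 0)) (h₁ : ConvC n w₁) (h₂ : ConvC n w₂)
    {t' t ε : ℝ} (htt : t' < t) (hε : ε ≤ 1) (hδ : deltaH ζ w₁ w₂ < ε * (ζ t' - ζ t))
    {x : En n} (hx : w₁ x ≤ t') : ∃ y, w₂ y ≤ t ∧ dist x y ≤ ε := by
  by_contra! hfar
  have hsub : Ioc (ζ t) (ζ t') ⊆ Ioi 0 := fun s hs => (hζpos t).trans hs.1
  have hint := integrableOn_dhatH_superlevelSet hζpos hζcont hζanti hmom h₁ h₂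
  have : ε * (ζ t' - ζ t) ≤ deltaH ζ w₁ w₂ :=
    calc ε * (ζ t' - ζ t) = ε * volume.real (Ioc (ζ t) (ζ t')) := by
          rw [Real.volume_real_Ioc_of_le (hζanti htt).le]
      _ ≤ ∫ s in Ioc (ζ t) (ζ t'), dhatH (superlevelSet ζ w₁ s) (superlevelSet ζ w₂ s) :=
          setIntegral_ge_of_const_le_real measurableSet_Ioc measure_Ioc_lt_top.ne
            (fun s hs => le_dhatH_superlevelSet hζanti hx (h₁.1 x) hfar hε hs (hsub hs)
              (h₁.isBounded_superlevelSet hζanti hmom (hsub hs))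
              (h₂.isBounded_superlevelSet hζanti hmom (hsub hs)))
            (hint.mono_set hsub)
      _ ≤ deltaH ζ w₁ w₂ := setIntegral_mono_set hint
          ((ae_restrict_mem measurableSet_Ioi).mono fun s _ => dhatH_nonneg _ _)
          hsub.eventuallyLE
  linarith

end DeltaH

section SublevelApproximation

variable {n : ℕ}

def SublevelApprox (u v : ℕ → En n → EReal) : Prop :=
  ∀ t' t : ℝ, t' < t → ∀ ε > 0, ∀ᶠ k in atTop, ∀ x, u k x ≤ t' → ∃ y, v k y ≤ t ∧ dist x y ≤ ε

lemma sublevelApprox_of_tendsto_deltaH {ζ : ℝ → ℝ} (hζpos : ∀ t, 0 < ζ t)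
    (hζcont : Continuous ζ) (hζanti : StrictAnti ζ) (hmom : IntegrableOn ζ (Ioi 0))
    {u v : ℕ → En n → EReal} (hu : ∀ k, ConvC n (u k)) (hv : ∀ k, ConvC n (v k))
    (hδ : Tendsto (fun k => deltaH ζ (u k) (v k)) atTop (𝓝 0)) : SublevelApprox u v := by
  intro t' t htt ε hε
  have hpos : 0 < min ε 1 * (ζ t' - ζ t) := mul_pos (lt_min hε one_pos) (sub_pos.2 (hζanti htt))
  filter_upwards [hδ.eventually_lt_const hpos] with k hk x hx
  obtain ⟨y, hy, hxy⟩ := exists_dist_le_of_deltaH_lt hζpos hζcont hζanti hmom (hu k) (hv k) htt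
    (min_le_right _ _) hk hx
  exact ⟨y, hy, hxy.trans (min_le_left _ _)⟩

end SublevelApproximation

section EpiConvergence

variable {n : ℕ} {u : ℕ → En n → EReal} {v : En n → EReal}

lemma le_liminf_of_sublevelApprox (h : SublevelApprox u fun _ => v) (hv : LowerSemicontinuous v)
    {x : En n} {y : ℕ → En n} (hy : Tendsto y atTop (𝓝 x)) :
    v x ≤ liminf (fun k => u k (y k)) atTop := by
  by_contra! hlt
  obtain ⟨a, hla, hav⟩ := EReal.lt_iff_exists_real_btwn.1 hlt
  obtain ⟨b, hab, hbv⟩ := EReal.lt_iff_exists_real_btwn.1 hav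
  have hfreq : ∃ᶠ k in atTop, u k (y k) < a := frequently_lt_of_liminf_lt (by isBoundedDefault) hla
  suffices hx : x ∈ closure (v ⁻¹' Iic b) by
    rw [(hv.isClosed_preimage b).closure_eq] at hx
    exact not_lt.2 hx hbv
  refine Metric.mem_closure_iff.2 fun ε hε => ?_
  obtain ⟨k, hk, hnear, hyk⟩ := (hfreq.and_eventually ((h a b (EReal.coe_lt_coe_iff.1 hab) (ε / 2)
    (half_pos hε)).and (hy.eventually (ball_mem_nhds x (half_pos hε))))).exists
  obtain ⟨z, hz, hyz⟩ := hnear (y k) hk.le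
  refine ⟨z, hz, ?_⟩
  calc dist x z ≤ dist (y k) x + dist (y k) z := dist_triangle_left _ _ _
    _ < ε / 2 + ε / 2 := add_lt_add_of_lt_of_le hyk hyz
    _ = ε := add_halves ε

/-- A recovery sequence: follow points of the epigraphs of `u k` approaching `(x, v x)`. -/
lemma exists_tendsto_limsup_le_of_sublevelApprox (h : SublevelApprox (fun _ => v) u)
    (hu : ∀ k, ∃ x, u k x ≠ ⊤) {x : En n} (hvx : v x ≠ ⊥) :
    ∃ y : ℕ → En n, Tendsto y atTop (𝓝 x) ∧ limsup (fun k => u k (y k)) atTop ≤ v x := by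
  by_cases hx : v x = ⊤
  · exact ⟨fun _ => x, tendsto_const_nhds, hx ▸ le_top⟩
  set r := (v x).toReal
  have hr : v x = r := (EReal.coe_toReal hx hvx).symm
  have hE : ∀ k, (epiSet (u k)).Nonempty := fun k =>
    let ⟨x', hx'⟩ := hu k; ⟨(x', (u k x').toReal), EReal.le_coe_toReal hx'⟩
  have hdist : Tendsto (fun k => infDist (x, r) (epiSet (u k))) atTop (𝓝 0) := by
    refine tendsto_order.2 ⟨fun a ha => Eventually.of_forall fun k => ha.trans_le infDist_nonneg,
      fun ε hε => ?_⟩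
    filter_upwards [h r (r + ε / 2) (by linarith) (ε / 2) (half_pos hε)] with k hk
    obtain ⟨y, hy, hxy⟩ := hk x hr.le
    refine (infDist_le_dist_of_mem (show (y, r + ε / 2) ∈ epiSet (u k) from hy)).trans_lt ?_
    rw [Prod.dist_eq, Real.dist_eq, sub_add_cancel_left, abs_neg, abs_of_pos (half_pos hε)]
    exact (max_le hxy le_rfl).trans_lt (half_lt_self hε)
  choose p hpE hp using fun k => (infDist_lt_iff (hE k)).1
    (lt_add_of_pos_right (infDist (x, r) (epiSet (u k))) (Nat.one_div_pos_of_nat (n := k)))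
  have hpt : Tendsto p atTop (𝓝 (x, r)) := by
    refine tendsto_iff_dist_tendsto_zero.2 (squeeze_zero (fun _ => dist_nonneg)
      (fun k => (dist_comm _ _).trans_le (hp k).le) ?_)
    simpa using hdist.add tendsto_one_div_add_atTop_nhds_zero_nat
  refine ⟨fun k => (p k).1, (continuous_fst.tendsto _).comp hpt, ?_⟩
  calc limsup (fun k => u k (p k).1) atTop ≤ limsup (fun k => ((p k).2 : EReal)) atTop :=
        limsup_le_limsup (Eventually.of_forall hpE)
    _ = v x := by
        rw [hr]
        exact (((continuous_coe_real_ereal.tendsto _).comp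
          ((continuous_snd.tendsto _).comp hpt))).limsup_eq

lemma tendsto_iInf_of_epiTendsto (he : EpiTendsto u v) (h : SublevelApprox u fun _ => v) :
    Tendsto (fun k => ⨅ x, u k x) atTop (𝓝 (⨅ x, v x)) := by
  refine tendsto_of_le_liminf_of_limsup_le (le_of_forall_lt fun c hc => ?_)
    (le_iInf fun x => ?_)
  · obtain ⟨t', hct', ht'⟩ := EReal.lt_iff_exists_real_btwn.1 hc
    obtain ⟨t, ht't, ht⟩ := EReal.lt_iff_exists_real_btwn.1 ht'
    -- a point of `{u k ≤ t'}` would give a point of `{v ≤ t} = ∅`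
    have hev : ∀ᶠ k in atTop, (t' : EReal) ≤ ⨅ x, u k x := by
      filter_upwards [h t' t (EReal.coe_lt_coe_iff.1 ht't) 1 one_pos] with k hk
      refine le_iInf fun x => le_of_not_ge fun hx => ?_
      obtain ⟨y, hy, -⟩ := hk x hx
      exact not_lt.2 ((iInf_le v y).trans hy) ht
    exact hct'.trans_le (le_liminf_of_le (by isBoundedDefault) hev)
  · obtain ⟨y, -, hy⟩ := (he x).2
    exact (limsup_le_limsup (Eventually.of_forall fun k => iInf_le _ (y k))).trans hy

end EpiConvergence

theorem statement18_general (n : ℕ)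
    (ζ : ℝ → ℝ) (hζpos : ∀ t, 0 < ζ t) (hζcont : Continuous ζ) (hζanti : StrictAnti ζ)
    (hmom : IntegrableOn ζ (Set.Ioi (0:ℝ)))
    (u : ℕ → En n → EReal) (v : En n → EReal)
    (hu : ∀ k, ConvC n (u k)) (hv : ConvC n v)
    (hconv : Tendsto (fun k => deltaH ζ (u k) v) atTop (𝓝 0)) :
    EpiTendsto u v ∧
      Tendsto (fun k => ⨅ x : En n, u k x) atTop (𝓝 (⨅ x : En n, v x)) := by
  have happrox : SublevelApprox u fun _ => v :=
    sublevelApprox_of_tendsto_deltaH hζpos hζcont hζanti hmom hu (fun _ => hv) hconv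
  have happrox' : SublevelApprox (fun _ => v) u :=
    sublevelApprox_of_tendsto_deltaH hζpos hζcont hζanti hmom (fun _ => hv) hu
      (hconv.congr fun k => deltaH_comm ζ (u k) v)
  have hepi : EpiTendsto u v := fun x =>
    ⟨fun _ hy => le_liminf_of_sublevelApprox happrox hv.2.2.1 hy,
      exists_tendsto_limsup_le_of_sublevelApprox happrox' (fun k => (hu k).2.1) (hv.1 x)⟩
  exact ⟨hepi, tendsto_iInf_of_epiTendsto hepi happrox⟩

theorem statement18 (n : ℕ) (hn : 1 ≤ n)
    (ζ : ℝ → ℝ) (hζpos : ∀ t, 0 < ζ t) (hζcont : Continuous ζ) (hζanti : StrictAnti ζ)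
    (hmom : IntegrableOn ζ (Set.Ioi (0:ℝ)))
    (u : ℕ → En n → EReal) (v : En n → EReal)
    (hu : ∀ k, ConvC n (u k)) (hv : ConvC n v)
    (hconv : Tendsto (fun k => deltaH ζ (u k) v) atTop (𝓝 0)) :
    EpiTendsto u v ∧
      Tendsto (fun k => ⨅ x : En n, u k x) atTop (𝓝 (⨅ x : En n, v x)) :=
  statement18_general n ζ hζpos hζcont hζanti hmom u v hu hv hconv
end
end
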